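/- Let a, c, d ∈ ℝ with c ≠ 0, set b = 2c² − a², ρ = ax + bt, q = c·e^{iρ}, r = i·d·e^{iρ}. Let λ₁ ∈ ℂ and let R ∈ ℂ satisfy R² = −a² − 4aλ₁ − 4c² − 4λ₁². For a choice of square root S and spectral value μ, write ψ110(S,μ), ψ111(S,μ), ψ120(S,μ), ψ121(S,μ) for the explicit eigenfunctions n₁·e^{iρ/2 + S(x/2+(μ−a/2)t)}, k₁·e^{iρ/2 + S(x/2+(μ−a/2)t)}, ((ai + 2iμ + S)n₁/(2c))·e^{−iρ/2 + S(x/2+(μ−a/2)t)}, (((aci + 2ciμ + Sc)k₁ + (ad + 2dμ − iSd)n₁)/(2c²))·e^{−iρ/2 + S(x/2+(μ−a/2)t)}, with fixed constants n₁, k₁ ∈ ℂ. Then the quadruple defined by φ110 = ψ110(R,λ₁) + ψ110(−R,λ₁) − conj(ψ120(conj(R), conj(λ₁))) − conj(ψ120(−conj(R), conj(λ₁))), φ111 = ψ111(R,λ₁) + ψ111(−R,λ₁) − conj(ψ121(conj(R), conj(λ₁))) − conj(ψ121(−conj(R), conj(λ₁))), φ120 = ψ120(R,λ₁) + ψ120(−R,λ₁)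 + conj(ψ110(conj(R), conj(λ₁))) + conj(ψ110(−conj(R), conj(λ₁))), φ121 = ψ121(R,λ₁) + ψ121(−R,λ₁) + conj(ψ111(conj(R), conj(λ₁))) + conj(ψ111(−conj(R), conj(λ₁))) is a solution of the Lax system of the Frobenius NLS equation at spectral parameter λ₁ for the potentials (q,r). -/

import Mathlib

open Complex

/-- Partial derivative in `x` of a function of `(x,t)`. -/
noncomputable def pX (f : ℝ → ℝ → ℂ) : ℝ → ℝ → ℂ := fun x t => deriv (fun x' => f x' t) x

/-- Partial derivative in `t` of a function of `(x,t)`. -/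
noncomputable def pT (f : ℝ → ℝ → ℂ) : ℝ → ℝ → ℂ := fun x t => deriv (fun t' => f x t') t

/-- The Lax system of the Frobenius NLS equation at spectral parameter `lam` for
potentials `(q, r)`, for the quadruple of functions `(p110, p111, p120, p121)` of `(x,t)`. -/
def FrobeniusLaxSolution (q r : ℝ → ℝ → ℂ) (lam : ℂ)
    (p110 p111 p120 p121 : ℝ → ℝ → ℂ) : Prop :=
  ∀ x t : ℝ,
    pX p110 x t = -I * lam * p110 x t + q x t * p120 x t ∧
    pX p111 x t = -I * lam * p111 x t + q x t * p121 x t + r x t * p120 x t ∧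
    pX p120 x t = I * lam * p120 x t - (starRingEnd ℂ) (q x t) * p110 x t ∧
    pX p121 x t = I * lam * p121 x t - (starRingEnd ℂ) (q x t) * p111 x t
      - (starRingEnd ℂ) (r x t) * p110 x t ∧
    pT p110 x t = (-2 * I * lam ^ 2 + I * q x t * (starRingEnd ℂ) (q x t)) * p110 x t
      + (2 * q x t * lam + I * pX q x t) * p120 x t ∧
    pT p111 x t = (-2 * I * lam ^ 2 + I * q x t * (starRingEnd ℂ) (q x t)) * p111 x t
      + I * ((starRingEnd ℂ) (q x t) * r x t + q x t * (starRingEnd ℂ) (r x t)) * p110 x t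
      + (2 * q x t * lam + I * pX q x t) * p121 x t
      + (2 * r x t * lam + I * pX r x t) * p120 x t ∧
    pT p120 x t = (-2 * (starRingEnd ℂ) (q x t) * lam
        + I * pX (fun x' t' => (starRingEnd ℂ) (q x' t')) x t) * p110 x t
      + (2 * I * lam ^ 2 - I * q x t * (starRingEnd ℂ) (q x t)) * p120 x t ∧
    pT p121 x t = (-2 * (starRingEnd ℂ) (q x t) * lam
        + I * pX (fun x' t' => (starRingEnd ℂ) (q x' t')) x t) * p111 x t
      + (-2 * (starRingEnd ℂ) (r x t) * lam
        + I * pX (fun x' t' => (starRingEnd ℂ) (r x' t')) x t) * p110 x t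
      + (2 * I * lam ^ 2 - I * q x t * (starRingEnd ℂ) (q x t)) * p121 x t
      - I * ((starRingEnd ℂ) (q x t) * r x t + q x t * (starRingEnd ℂ) (r x t)) * p120 x t

/-!
The seed potentials `q = c e^{iρ}`, `r = i d e^{iρ}` and the eigenfunctions are plane waves
`C e^{u x + v t}`. Dividing out the phases `e^{±iρ/2 + θ}` turns the Lax system for one
eigenfunction into eight linear equations for its constant coefficients, which hold because
`S² = -(a + 2μ)² - 4c²` and `b = 2c² - a²`. The Lax system is linear and is mapped to itself by
`(φ₁, φ₂) ↦ (-φ̄₂, φ̄₁)`, `λ ↦ λ̄`, so the four-term superposition solves it as well.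
-/

open ComplexConjugate

noncomputable def planeWave (C u v : ℂ) (x t : ℝ) : ℂ := C * exp (u * x + v * t)

theorem hasDerivAt_planeWave_x (C u v : ℂ) (x t : ℝ) :
    HasDerivAt (fun y => planeWave C u v y t) (u * planeWave C u v x t) x := by
  have h := (((hasDerivAt_id (x : ℂ)).const_mul u).add_const (v * t)).cexp.const_mul C
  exact h.comp_ofReal.congr_deriv (by simp only [planeWave, id]; ring)

theorem hasDerivAt_planeWave_t (C u v : ℂ) (x t : ℝ) :
    HasDerivAt (fun s => planeWave C u v x s) (v * planeWave C u v x t) t := by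
  have h := (((hasDerivAt_id (t : ℂ)).const_mul v).const_add (u * x)).cexp.const_mul C
  exact h.comp_ofReal.congr_deriv (by simp only [planeWave, id]; ring)

theorem pX_planeWave (C u v : ℂ) (x t : ℝ) : pX (planeWave C u v) x t = u * planeWave C u v x t :=
  (hasDerivAt_planeWave_x C u v x t).deriv

theorem conj_planeWave (C u v : ℂ) (x t : ℝ) :
    conj (planeWave C u v x t) = planeWave (conj C) (conj u) (conj v) x t := by
  simp [planeWave, ← exp_conj]

theorem pX_conj (f : ℝ → ℝ → ℂ) (x t : ℝ) :
    pX (fun x t => conj (f x t)) x t = conj (pX f x t) :=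
  deriv.star

/-- `FrobeniusLaxSolution` with `HasDerivAt` in place of `deriv`: unlike the latter, which is junk
at points of non-differentiability, this form is visibly closed under sums. -/
def FrobeniusLaxHasDerivAt (q r : ℝ → ℝ → ℂ) (lam : ℂ) (p110 p111 p120 p121 : ℝ → ℝ → ℂ) :
    Prop :=
  ∀ x t : ℝ,
    HasDerivAt (fun y => p110 y t) (-I * lam * p110 x t + q x t * p120 x t) x ∧
    HasDerivAt (fun y => p111 y t) (-I * lam * p111 x t + q x t * p121 x t + r x t * p120 x t) x ∧
    HasDerivAt (fun y => p120 y t) (I * lam * p120 x t - conj (q x t) * p110 x t) x ∧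
    HasDerivAt (fun y => p121 y t)
      (I * lam * p121 x t - conj (q x t) * p111 x t - conj (r x t) * p110 x t) x ∧
    HasDerivAt (fun s => p110 x s) ((-2 * I * lam ^ 2 + I * q x t * conj (q x t)) * p110 x t
      + (2 * q x t * lam + I * pX q x t) * p120 x t) t ∧
    HasDerivAt (fun s => p111 x s) ((-2 * I * lam ^ 2 + I * q x t * conj (q x t)) * p111 x t
      + I * (conj (q x t) * r x t + q x t * conj (r x t)) * p110 x t
      + (2 * q x t * lam + I * pX q x t) * p121 x t
      + (2 * r x t * lam + I * pX r x t) * p120 x t) t ∧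
    HasDerivAt (fun s => p120 x s)
      ((-2 * conj (q x t) * lam + I * pX (fun x' t' => conj (q x' t')) x t) * p110 x t
      + (2 * I * lam ^ 2 - I * q x t * conj (q x t)) * p120 x t) t ∧
    HasDerivAt (fun s => p121 x s)
      ((-2 * conj (q x t) * lam + I * pX (fun x' t' => conj (q x' t')) x t) * p111 x t
      + (-2 * conj (r x t) * lam + I * pX (fun x' t' => conj (r x' t')) x t) * p110 x t
      + (2 * I * lam ^ 2 - I * q x t * conj (q x t)) * p121 x t
      - I * (conj (q x t) * r x t + q x t * conj (r x t)) * p120 x t) t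

namespace FrobeniusLaxHasDerivAt

variable {q r : ℝ → ℝ → ℂ} {lam : ℂ} {p110 p111 p120 p121 s110 s111 s120 s121 : ℝ → ℝ → ℂ}

theorem frobeniusLaxSolution (h : FrobeniusLaxHasDerivAt q r lam p110 p111 p120 p121) :
    FrobeniusLaxSolution q r lam p110 p111 p120 p121 := fun x t =>
  let ⟨h1, h2, h3, h4, h5, h6, h7, h8⟩ := h x t
  ⟨h1.deriv, h2.deriv, h3.deriv, h4.deriv, h5.deriv, h6.deriv, h7.deriv, h8.deriv⟩

theorem add (hp : FrobeniusLaxHasDerivAt q r lam p110 p111 p120 p121)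
    (hs : FrobeniusLaxHasDerivAt q r lam s110 s111 s120 s121) :
    FrobeniusLaxHasDerivAt q r lam (p110 + s110) (p111 + s111) (p120 + s120) (p121 + s121) := by
  intro x t
  obtain ⟨h1, h2, h3, h4, h5, h6, h7, h8⟩ := hp x t
  obtain ⟨g1, g2, g3, g4, g5, g6, g7, g8⟩ := hs x t
  refine ⟨(h1.add g1).congr_deriv ?_, (h2.add g2).congr_deriv ?_, (h3.add g3).congr_deriv ?_,
    (h4.add g4).congr_deriv ?_, (h5.add g5).congr_deriv ?_, (h6.add g6).congr_deriv ?_,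
    (h7.add g7).congr_deriv ?_, (h8.add g8).congr_deriv ?_⟩ <;>
  · simp only [Pi.add_apply]
    ring

theorem conj_swap (h : FrobeniusLaxHasDerivAt q r (conj lam) p110 p111 p120 p121) :
    FrobeniusLaxHasDerivAt q r lam (fun x t => -conj (p120 x t)) (fun x t => -conj (p121 x t))
      (fun x t => conj (p110 x t)) (fun x t => conj (p111 x t)) := by
  intro x t
  obtain ⟨h1, h2, h3, h4, h5, h6, h7, h8⟩ := h x t
  refine ⟨h3.star.neg.congr_deriv ?_, h4.star.neg.congr_deriv ?_, h1.star.congr_deriv ?_,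
    h2.star.congr_deriv ?_, h7.star.neg.congr_deriv ?_, h8.star.neg.congr_deriv ?_,
    h5.star.congr_deriv ?_, h6.star.congr_deriv ?_⟩ <;>
  · simp only [← starRingEnd_apply, pX_conj, map_add, map_sub, map_mul, map_neg, map_pow,
      conj_conj, conj_I, map_ofNat]
    ring

end FrobeniusLaxHasDerivAt

/-- The Lax system for `n e^{iρ/2+θ}, k e^{iρ/2+θ}, m e^{-iρ/2+θ}, l e^{-iρ/2+θ}`, where
`ρ = a x + b t` and `θ = σ x + τ t`, after the exponentials are divided out. -/
def IsGaugedLaxEigenvector (a b c d : ℝ) (μ σ τ n k m l : ℂ) : Prop :=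
  (I * a / 2 + σ) * n = -I * μ * n + c * m ∧
  (I * a / 2 + σ) * k = -I * μ * k + c * l + I * d * m ∧
  (-(I * a) / 2 + σ) * m = I * μ * m - c * n ∧
  (-(I * a) / 2 + σ) * l = I * μ * l - c * k + I * d * n ∧
  (I * b / 2 + τ) * n = (-2 * I * μ ^ 2 + I * c ^ 2) * n + (2 * μ - a) * c * m ∧
  (I * b / 2 + τ) * k = (-2 * I * μ ^ 2 + I * c ^ 2) * k + (2 * μ - a) * (c * l + I * d * m) ∧
  (-(I * b) / 2 + τ) * m = (2 * I * μ ^ 2 - I * c ^ 2) * m - (2 * μ - a) * c * n ∧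
  (-(I * b) / 2 + τ) * l = (2 * I * μ ^ 2 - I * c ^ 2) * l - (2 * μ - a) * (c * k - I * d * n)

theorem frobeniusLaxHasDerivAt_planeWave {a b c d : ℝ} {μ σ τ n k m l : ℂ}
    (h : IsGaugedLaxEigenvector a b c d μ σ τ n k m l) :
    FrobeniusLaxHasDerivAt (planeWave c (I * a) (I * b)) (planeWave (I * d) (I * a) (I * b)) μ
      (planeWave n (I * a / 2 + σ) (I * b / 2 + τ)) (planeWave k (I * a / 2 + σ) (I * b / 2 + τ))
      (planeWave m (-(I * a) / 2 + σ) (-(I * b) / 2 + τ))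
      (planeWave l (-(I * a) / 2 + σ) (-(I * b) / 2 + τ)) := by
  obtain ⟨hx1, hx2, hx3, hx4, ht1, ht2, ht3, ht4⟩ := h
  intro x t
  simp only [pX_planeWave, conj_planeWave, map_mul, conj_ofReal, conj_I]
  refine ⟨(hasDerivAt_planeWave_x _ _ _ x t).congr_deriv ?_,
    (hasDerivAt_planeWave_x _ _ _ x t).congr_deriv ?_,
    (hasDerivAt_planeWave_x _ _ _ x t).congr_deriv ?_,
    (hasDerivAt_planeWave_x _ _ _ x t).congr_deriv ?_,
    (hasDerivAt_planeWave_t _ _ _ x t).congr_deriv ?_,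
    (hasDerivAt_planeWave_t _ _ _ x t).congr_deriv ?_,
    (hasDerivAt_planeWave_t _ _ _ x t).congr_deriv ?_,
    (hasDerivAt_planeWave_t _ _ _ x t).congr_deriv ?_⟩
  all_goals
    simp only [planeWave]
    set e := exp (I * a * x + I * b * t)
    set ec := exp (-I * a * x + -I * b * t)
    set Ep := exp ((I * a / 2 + σ) * x + (I * b / 2 + τ) * t)
    set Em := exp ((-(I * a) / 2 + σ) * x + (-(I * b) / 2 + τ) * t)
    have he : e * Em = Ep := by
      simp only [e, Ep, Em, ← exp_add]; ring_nf
    have hec : ec * Ep = Em := by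
      simp only [ec, Ep, Em, ← exp_add]; ring_nf
    have hee : e * ec = 1 := by
      simp only [e, ec, ← exp_add]; ring_nf; simp
  · linear_combination Ep * hx1 - c * m * he
  · linear_combination Ep * hx2 - (c * l + I * d * m) * he
  · linear_combination Em * hx3 + c * n * hec
  · linear_combination Em * hx4 + (c * k - I * d * n) * hec
  · linear_combination Ep * ht1 - I * c ^ 2 * n * Ep * hee - (2 * μ - a) * c * m * he
      - c * a * m * e * Em * I_sq
  · linear_combination Ep * ht2 - I * c ^ 2 * k * Ep * hee
      - (2 * μ - a) * (c * l + I * d * m) * he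
      - (c * l + I * d * m) * a * e * Em * I_sq
  · linear_combination Em * ht3 + (2 * μ - a) * c * n * hec + I * c ^ 2 * m * Em * hee
      + c * a * n * ec * Ep * I_sq
  · linear_combination Em * ht4 + I * c ^ 2 * l * Em * hee
      + (2 * μ - a) * (c * k - I * d * n) * hec
      + (c * k - I * d * n) * a * ec * Ep * I_sq

theorem isGaugedLaxEigenvector_of_sq_eq {a b c d : ℝ} (hc : c ≠ 0) (hb : b = 2 * c ^ 2 - a ^ 2)
    {μ S : ℂ} (hS : S ^ 2 = -(a : ℂ) ^ 2 - 4 * a * μ - 4 * c ^ 2 - 4 * μ ^ 2) (n k : ℂ) :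
    IsGaugedLaxEigenvector a b c d μ (S / 2) (S * (μ - a / 2)) n k
      ((a * I + 2 * I * μ + S) * n / (2 * c))
      (((a * c * I + 2 * c * I * μ + S * c) * k + (a * d + 2 * d * μ - I * S * d) * n) /
        (2 * c ^ 2)) := by
  have hc' : (c : ℂ) ≠ 0 := ofReal_ne_zero.mpr hc
  subst hb
  unfold IsGaugedLaxEigenvector
  push_cast
  refine ⟨?_, ?_, ?_, ?_, ?_, ?_, ?_, ?_⟩ <;> field_simp
  · ring
  · linear_combination -(d * n * (a + 2 * μ)) * I_sq
  · linear_combination n * hS - n * (a + 2 * μ) ^ 2 * I_sq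
  · linear_combination (c * k - I * d * n) * hS
      + (a + 2 * μ) * (S * d * n - (a + 2 * μ) * c * k) * I_sq
  · ring
  · linear_combination d * n * (a ^ 2 - 4 * μ ^ 2) * I_sq
  · linear_combination (2 * μ - a) * n * hS - (2 * μ - a) * (a + 2 * μ) ^ 2 * n * I_sq
  · linear_combination (2 * μ - a) * (c * k - I * d * n) * hS
      + (2 * μ - a) * (a + 2 * μ) * (S * d * n - (a + 2 * μ) * c * k) * I_sq

/-- the superposition of the explicit eigenfunctions at `(±R, λ₁)` together
with the conjugated eigenfunctions at `(±conj R, conj λ₁)` solves the Lax system of the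
Frobenius NLS equation at spectral parameter `λ₁` for the periodic seed potentials. -/
theorem statement12 (a c d : ℝ) (hc : c ≠ 0) (b : ℝ) (hb : b = 2 * c ^ 2 - a ^ 2)
    (ρ : ℝ → ℝ → ℝ) (hρ : ∀ x t : ℝ, ρ x t = a * x + b * t)
    (q r : ℝ → ℝ → ℂ)
    (hq : ∀ x t : ℝ, q x t = (c : ℂ) * Complex.exp (I * (ρ x t : ℂ)))
    (hr : ∀ x t : ℝ, r x t = I * (d : ℂ) * Complex.exp (I * (ρ x t : ℂ)))
    (lam1 R n1 k1 : ℂ)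
    (hR : R ^ 2 = -(a : ℂ) ^ 2 - 4 * (a : ℂ) * lam1 - 4 * (c : ℂ) ^ 2 - 4 * lam1 ^ 2)
    (ψ110 ψ111 ψ120 ψ121 : ℂ → ℂ → ℝ → ℝ → ℂ)
    (h110 : ∀ (S μ : ℂ) (x t : ℝ), ψ110 S μ x t =
      n1 * Complex.exp (I * (ρ x t : ℂ) / 2 + S * ((x : ℂ) / 2 + (μ - (a : ℂ) / 2) * (t : ℂ))))
    (h111 : ∀ (S μ : ℂ) (x t : ℝ), ψ111 S μ x t =
      k1 * Complex.exp (I * (ρ x t : ℂ) / 2 + S * ((x : ℂ) / 2 + (μ - (a : ℂ) / 2) * (t : ℂ))))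
    (h120 : ∀ (S μ : ℂ) (x t : ℝ), ψ120 S μ x t =
      (((a : ℂ) * I + 2 * I * μ + S) * n1 / (2 * (c : ℂ)))
        * Complex.exp (-(I * (ρ x t : ℂ)) / 2 + S * ((x : ℂ) / 2 + (μ - (a : ℂ) / 2) * (t : ℂ))))
    (h121 : ∀ (S μ : ℂ) (x t : ℝ), ψ121 S μ x t =
      ((((a : ℂ) * (c : ℂ) * I + 2 * (c : ℂ) * I * μ + S * (c : ℂ)) * k1
          + ((a : ℂ) * (d : ℂ) + 2 * (d : ℂ) * μ - I * S * (d : ℂ)) * n1) / (2 * (c : ℂ) ^ 2))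
        * Complex.exp (-(I * (ρ x t : ℂ)) / 2 + S * ((x : ℂ) / 2 + (μ - (a : ℂ) / 2) * (t : ℂ))))
    (φ110 φ111 φ120 φ121 : ℝ → ℝ → ℂ)
    (hφ110 : ∀ x t : ℝ, φ110 x t =
      ψ110 R lam1 x t + ψ110 (-R) lam1 x t
        - (starRingEnd ℂ) (ψ120 ((starRingEnd ℂ) R) ((starRingEnd ℂ) lam1) x t)
        - (starRingEnd ℂ) (ψ120 (-(starRingEnd ℂ) R) ((starRingEnd ℂ) lam1) x t))
    (hφ111 : ∀ x t : ℝ, φ111 x t =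
      ψ111 R lam1 x t + ψ111 (-R) lam1 x t
        - (starRingEnd ℂ) (ψ121 ((starRingEnd ℂ) R) ((starRingEnd ℂ) lam1) x t)
        - (starRingEnd ℂ) (ψ121 (-(starRingEnd ℂ) R) ((starRingEnd ℂ) lam1) x t))
    (hφ120 : ∀ x t : ℝ, φ120 x t =
      ψ120 R lam1 x t + ψ120 (-R) lam1 x t
        + (starRingEnd ℂ) (ψ110 ((starRingEnd ℂ) R) ((starRingEnd ℂ) lam1) x t)
        + (starRingEnd ℂ) (ψ110 (-(starRingEnd ℂ) R) ((starRingEnd ℂ) lam1) x t))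
    (hφ121 : ∀ x t : ℝ, φ121 x t =
      ψ121 R lam1 x t + ψ121 (-R) lam1 x t
        + (starRingEnd ℂ) (ψ111 ((starRingEnd ℂ) R) ((starRingEnd ℂ) lam1) x t)
        + (starRingEnd ℂ) (ψ111 (-(starRingEnd ℂ) R) ((starRingEnd ℂ) lam1) x t)) :
    FrobeniusLaxSolution q r lam1 φ110 φ111 φ120 φ121 := by
  have hq' : q = planeWave c (I * a) (I * b) := by
    funext x t; rw [hq, hρ, planeWave]; push_cast; ring_nf
  have hr' : r = planeWave (I * d) (I * a) (I * b) := by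
    funext x t; rw [hr, hρ, planeWave]; push_cast; ring_nf
  have eigen : ∀ S μ : ℂ, S ^ 2 = -(a : ℂ) ^ 2 - 4 * a * μ - 4 * c ^ 2 - 4 * μ ^ 2 →
      FrobeniusLaxHasDerivAt q r μ (ψ110 S μ) (ψ111 S μ) (ψ120 S μ) (ψ121 S μ) := by
    intro S μ hS
    rw [hq', hr']
    convert frobeniusLaxHasDerivAt_planeWave (isGaugedLaxEigenvector_of_sq_eq hc hb hS n1 k1)
      using 1 <;> funext x t <;> simp only [h110, h111, h120, h121, hρ, planeWave] <;>
      push_cast <;> ring_nf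
  have hRconj : conj R ^ 2 = -(a : ℂ) ^ 2 - 4 * a * conj lam1 - 4 * c ^ 2 - 4 * conj lam1 ^ 2 := by
    simpa [map_ofNat] using congrArg conj hR
  have sum := ((eigen R lam1 hR).add (eigen (-R) lam1 (by rwa [neg_sq]))).add
    ((eigen (conj R) (conj lam1) hRconj).conj_swap.add
      (eigen (-conj R) (conj lam1) (by rwa [neg_sq])).conj_swap)
  refine FrobeniusLaxHasDerivAt.frobeniusLaxSolution ?_
  convert sum using 1 <;> funext x t <;>
    simp only [hφ110, hφ111, hφ120, hφ121, Pi.add_apply] <;> ring
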